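/- Let Q be a sub-Markov kernel on a measurable space E with Q1(x) > 0 for every x ∈ E, and let ε ≥ 0 be such that for all x, y ∈ E, ‖Q(x,·)/Q1(x) − Q(y,·)/Q1(y)‖_TV ≤ ε. Then for every pair of probability measures μ, ν on E one has μQ(E) > 0, νQ(E) > 0, and ‖(μQ)/(μQ(E)) − (νQ)/(νQ(E))‖_TV ≤ ε. -/

import Mathlib

open MeasureTheory ProbabilityTheory

/-- Total variation distance between two measures, defined as the supremum of
`|∫ f dμ − ∫ f dν|` over measurable functions `f` with `‖f‖∞ ≤ 1`. -/
noncomputable def tvDist {E : Type*} [MeasurableSpace E] (μ ν : Measure E) : ℝ :=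
  ⨆ f : {f : E → ℝ // Measurable f ∧ ∀ x, |f x| ≤ 1},
    |(∫ x, f.1 x ∂μ) - ∫ x, f.1 x ∂ν|

/-!
Normalizing `μQ` amounts to applying the Markov kernel `K(x,·) = Q(x,·)/Q1(x)` to the probability
measure proportional to `Q1 · μ`. A Markov kernel whose rows are pairwise `ε`-close in total
variation maps any two probability measures to `ε`-close ones: for a test function `f`, the
function `x ↦ ∫ f dK(x)` has oscillation at most `ε`, so its averages under two probability
measures differ by at most `ε`.
-/

open Set
open scoped ENNReal

section TotalVariation

variable {α : Type*} [MeasurableSpace α]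

lemma abs_integral_le_of_forall_abs_le {μ : Measure α} [IsFiniteMeasure μ] {f : α → ℝ} {C : ℝ}
    (h : ∀ x, |f x| ≤ C) : |∫ x, f x ∂μ| ≤ C * μ.real univ :=
  norm_integral_le_of_norm_le_const (f := f) (.of_forall h)

lemma abs_integral_sub_integral_le_tvDist (μ ν : Measure α) [IsFiniteMeasure μ]
    [IsFiniteMeasure ν] {f : α → ℝ} (hf : Measurable f) (hf1 : ∀ x, |f x| ≤ 1) :
    |(∫ x, f x ∂μ) - ∫ x, f x ∂ν| ≤ tvDist μ ν := by
  refine le_ciSup (f := fun g : {f : α → ℝ // Measurable f ∧ ∀ x, |f x| ≤ 1} =>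
    |(∫ x, g.1 x ∂μ) - ∫ x, g.1 x ∂ν|) ⟨μ.real univ + ν.real univ, ?_⟩ ⟨f, hf, hf1⟩
  rintro _ ⟨⟨g, -, hg1⟩, rfl⟩
  exact (abs_sub _ _).trans <| by
    simpa using add_le_add (abs_integral_le_of_forall_abs_le (μ := μ) hg1)
      (abs_integral_le_of_forall_abs_le (μ := ν) hg1)

lemma tvDist_le {μ ν : Measure α} {ε : ℝ}
    (h : ∀ f : α → ℝ, Measurable f → (∀ x, |f x| ≤ 1) →
      |(∫ x, f x ∂μ) - ∫ x, f x ∂ν| ≤ ε) :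
    tvDist μ ν ≤ ε :=
  have : Nonempty {f : α → ℝ // Measurable f ∧ ∀ x, |f x| ≤ 1} :=
    ⟨⟨0, measurable_const, by simp⟩⟩
  ciSup_le fun f => h f.1 f.2.1 f.2.2

lemma abs_integral_sub_integral_le_of_abs_sub_le {μ ν : Measure α} [IsProbabilityMeasure μ]
    [IsProbabilityMeasure ν] {g : α → ℝ} {ε : ℝ} (hμ : Integrable g μ) (hν : Integrable g ν)
    (hg : ∀ x y, |g x - g y| ≤ ε) :
    |(∫ x, g x ∂μ) - ∫ y, g y ∂ν| ≤ ε := by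
  have hmean (x : α) : |g x - ∫ y, g y ∂ν| ≤ ε := by
    have : g x - ∫ y, g y ∂ν = ∫ y, (g x - g y) ∂ν := by
      rw [integral_sub (integrable_const _) hν]; simp
    simpa [this] using abs_integral_le_of_forall_abs_le (μ := ν) (hg x)
  have : (∫ x, g x ∂μ) - ∫ y, g y ∂ν = ∫ x, (g x - ∫ y, g y ∂ν) ∂μ := by
    rw [integral_sub hμ (integrable_const _)]; simp
  simpa [this] using abs_integral_le_of_forall_abs_le (μ := μ) hmean

end TotalVariation

section KernelComposition

variable {α β : Type*} [MeasurableSpace α] [MeasurableSpace β]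

lemma MeasureTheory.Measure.integral_comp {μ : Measure α} {κ : Kernel α β} {f : β → ℝ}
    (hf : Integrable f (κ ∘ₘ μ)) :
    ∫ y, f y ∂(κ ∘ₘ μ) = ∫ x, ∫ y, f y ∂κ x ∂μ := by
  rw [Measure.comp_eq_comp_const_apply] at hf
  simpa [← Measure.comp_eq_comp_const_apply] using Kernel.integral_comp hf

theorem tvDist_comp_le {κ : Kernel α β} [IsMarkovKernel κ] {ε : ℝ}
    (hκ : ∀ x y, tvDist (κ x) (κ y) ≤ ε) (μ ν : Measure α) [IsProbabilityMeasure μ]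
    [IsProbabilityMeasure ν] :
    tvDist (κ ∘ₘ μ) (κ ∘ₘ ν) ≤ ε := by
  refine tvDist_le fun f hf hf1 => ?_
  have hfint (ρ : Measure β) [IsFiniteMeasure ρ] : Integrable f ρ :=
    .of_bound hf.aestronglyMeasurable 1 (.of_forall hf1)
  set g : α → ℝ := fun x => ∫ y, f y ∂κ x
  have hg : StronglyMeasurable g := hf.stronglyMeasurable.integral_kernel
  have hg1 (x : α) : |g x| ≤ 1 := by
    simpa using abs_integral_le_of_forall_abs_le (μ := κ x) hf1
  have hgint (ρ : Measure α) [IsFiniteMeasure ρ] : Integrable g ρ :=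
    .of_bound hg.aestronglyMeasurable 1 (.of_forall hg1)
  rw [Measure.integral_comp (hfint _), Measure.integral_comp (hfint _)]
  exact abs_integral_sub_integral_le_of_abs_sub_le (hgint μ) (hgint ν) fun x y =>
    (abs_integral_sub_integral_le_tvDist (κ x) (κ y) hf hf1).trans (hκ x y)

lemma MeasureTheory.Measure.withDensity_ne_zero {μ : Measure α} [NeZero μ] {f : α → ℝ≥0∞}
    (hf : AEMeasurable f μ) (hf0 : ∀ x, f x ≠ 0) : μ.withDensity f ≠ 0 := by
  rw [Ne, withDensity_eq_zero_iff hf]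
  have : (ae μ).NeBot := ae_neBot.mpr (NeZero.ne μ)
  exact fun h => (h.exists).elim hf0

namespace ProbabilityTheory.Kernel

variable (κ : Kernel α β) (μ : Measure α)

noncomputable def normalize : Kernel α β where
  toFun x := (κ x univ)⁻¹ • κ x
  measurable' := Measure.measurable_of_measurable_coe _ fun _ hs =>
    (κ.measurable_coe .univ).inv.mul (κ.measurable_coe hs)

lemma normalize_apply (x : α) : κ.normalize x = (κ x univ)⁻¹ • κ x := rfl

instance isMarkovKernel_normalize [IsFiniteKernel κ] [∀ x, NeZero (κ x)] :
    IsMarkovKernel κ.normalize :=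
  ⟨fun x => by rw [normalize_apply]; infer_instance⟩

lemma normalize_comp_withDensity [IsFiniteKernel κ] :
    κ.normalize ∘ₘ μ.withDensity (fun x => κ x univ) = κ ∘ₘ μ := by
  ext s hs
  rw [Measure.bind_apply hs κ.normalize.aemeasurable, Measure.bind_apply hs κ.aemeasurable,
    lintegral_withDensity_eq_lintegral_mul _ (κ.measurable_coe .univ)
      (κ.normalize.measurable_coe hs)]
  refine lintegral_congr fun x => ?_
  rcases eq_or_ne (κ x univ) 0 with h0 | h0
  · simp [Measure.measure_univ_eq_zero.mp h0]
  · simp [normalize_apply, ← mul_assoc, ENNReal.mul_inv_cancel h0 (measure_ne_top _ _)]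

lemma withDensity_apply_univ_eq_comp :
    μ.withDensity (fun x => κ x univ) univ = (κ ∘ₘ μ) univ := by
  rw [withDensity_apply _ .univ, Measure.restrict_univ, Measure.bind_apply .univ κ.aemeasurable]

lemma comp_apply_univ_ne_zero [∀ x, NeZero (κ x)] [NeZero μ] : (κ ∘ₘ μ) univ ≠ 0 := by
  rw [← withDensity_apply_univ_eq_comp, Ne, Measure.measure_univ_eq_zero]
  exact Measure.withDensity_ne_zero (κ.measurable_coe .univ).aemeasurable fun x => NeZero.ne _

instance isProbabilityMeasure_normalized_withDensity [IsFiniteKernel κ] [∀ x, NeZero (κ x)]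
    [IsFiniteMeasure μ] [NeZero μ] :
    IsProbabilityMeasure
      ((μ.withDensity (fun x => κ x univ) univ)⁻¹ • μ.withDensity (fun x => κ x univ)) :=
  have : IsFiniteMeasure (μ.withDensity fun x => κ x univ) :=
    ⟨by rw [withDensity_apply_univ_eq_comp]; exact measure_lt_top _ _⟩
  have : NeZero (μ.withDensity fun x => κ x univ) :=
    ⟨by rw [← Measure.measure_univ_ne_zero, withDensity_apply_univ_eq_comp]
        exact comp_apply_univ_ne_zero κ μ⟩
  inferInstance

lemma normalize_comp_normalized_withDensity [IsFiniteKernel κ] :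
    κ.normalize ∘ₘ ((μ.withDensity (fun x => κ x univ) univ)⁻¹ • μ.withDensity (fun x => κ x univ))
      = ((κ ∘ₘ μ) univ)⁻¹ • (κ ∘ₘ μ) := by
  rw [Measure.comp_smul, normalize_comp_withDensity, withDensity_apply_univ_eq_comp]

end ProbabilityTheory.Kernel

end KernelComposition

theorem tv_normalized_kernel_to_measures_general
    {E : Type*} [MeasurableSpace E]
    (Q : Kernel E E)
    (hsub : ∀ x, Q x Set.univ ≤ 1)
    (hpos : ∀ x, 0 < Q x Set.univ)
    (ε : ℝ)
    (h : ∀ x y : E,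
      tvDist ((Q x Set.univ)⁻¹ • Q x) ((Q y Set.univ)⁻¹ • Q y) ≤ ε)
    (μ ν : Measure E) [IsProbabilityMeasure μ] [IsProbabilityMeasure ν] :
    0 < (μ.bind (fun a => Q a)) Set.univ ∧
    0 < (ν.bind (fun a => Q a)) Set.univ ∧
    tvDist (((μ.bind (fun a => Q a)) Set.univ)⁻¹ • μ.bind (fun a => Q a))
           (((ν.bind (fun a => Q a)) Set.univ)⁻¹ • ν.bind (fun a => Q a)) ≤ ε := by
  have : IsFiniteKernel Q := ⟨⟨1, ENNReal.one_lt_top, hsub⟩⟩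
  have (x : E) : NeZero (Q x) := ⟨Measure.measure_univ_ne_zero.mp (hpos x).ne'⟩
  refine ⟨pos_iff_ne_zero.mpr (Q.comp_apply_univ_ne_zero μ),
    pos_iff_ne_zero.mpr (Q.comp_apply_univ_ne_zero ν), ?_⟩
  rw [← Q.normalize_comp_normalized_withDensity μ, ← Q.normalize_comp_normalized_withDensity ν]
  exact tvDist_comp_le (κ := Q.normalize) h _ _

/-- If the normalized kernels `Q(x,·)/Q1(x)` are pairwise within TV
distance `ε`, then the normalized measures `(μQ)/(μQ(E))` and `(νQ)/(νQ(E))` are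
within TV distance `ε` for all probability measures `μ, ν`, and the normalizations
are positive. -/
theorem tv_normalized_kernel_to_measures
    {E : Type*} [MeasurableSpace E]
    (Q : Kernel E E)
    (hsub : ∀ x, Q x Set.univ ≤ 1)
    (hpos : ∀ x, 0 < Q x Set.univ)
    (ε : ℝ) (hε : 0 ≤ ε)
    (h : ∀ x y : E,
      tvDist ((Q x Set.univ)⁻¹ • Q x) ((Q y Set.univ)⁻¹ • Q y) ≤ ε)
    (μ ν : Measure E) [IsProbabilityMeasure μ] [IsProbabilityMeasure ν] :
    0 < (μ.bind (fun a => Q a)) Set.univ ∧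
    0 < (ν.bind (fun a => Q a)) Set.univ ∧
    tvDist (((μ.bind (fun a => Q a)) Set.univ)⁻¹ • μ.bind (fun a => Q a))
           (((ν.bind (fun a => Q a)) Set.univ)⁻¹ • ν.bind (fun a => Q a)) ≤ ε :=
  tv_normalized_kernel_to_measures_general Q hsub hpos ε h μ ν
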